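/- Consider the system A₁X₁B₁ + C₁X₂D₁ = E₁ and A₂X₂B₂ + C₂X₃D₂ = E₂ over ℂ. If it is solvable, then rank[[A₁, E₁, C₁, 0],[0, D₁, 0, B₂],[0, 0, A₂, -E₂],[0, 0, 0, D₂]] = rank[[A₁, C₁, 0],[0, A₂, 0]] + rank[[D₁, B₂],[0, D₂]]. -/

import Mathlib

open Matrix

/-!
After permuting rows and columns, the left-hand matrix is the block upper-triangular matrix
`[[P, E], [0, Q]]` with `P = [[A₁, C₁], [0, A₂]]`, `Q = [[D₁, B₂], [0, D₂]]` and
`E = [[E₁, 0], [0, -E₂]]`. A solution of the system writes `E = P Y + Z Q` with block-diagonal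
`Y`, `Z`, and then unipotent row and column operations clear `E`, leaving `diag(P, Q)`.
-/

theorem Submodule.finrank_prod {R M N : Type*} [DivisionRing R] [AddCommGroup M] [AddCommGroup N]
    [Module R M] [Module R N] (p : Submodule R M) (q : Submodule R N)
    [FiniteDimensional R p] [FiniteDimensional R q] :
    Module.finrank R (p.prod q) = Module.finrank R p + Module.finrank R q := by
  have hrange : p.prod q = LinearMap.range (p.subtype.prodMap q.subtype) := by
    rw [LinearMap.range_prodMap, Submodule.range_subtype, Submodule.range_subtype]
  rw [hrange, LinearMap.finrank_range_of_inj (p.injective_subtype.prodMap q.injective_subtype),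
    Module.finrank_prod]

namespace Matrix

variable {R : Type*} {l m n o : Type*}

theorem rank_fromBlocks_zero_zero [Field R] [Fintype l] [Fintype m] [Fintype o]
    (A : Matrix l m R) (D : Matrix n o R) :
    (fromBlocks A 0 0 D).rank = A.rank + D.rank := by
  have hlin : (fromBlocks A 0 0 D).mulVecLin =
      ((LinearEquiv.sumArrowLequivProdArrow l n R R).symm : _ →ₗ[R] _) ∘ₗ
        A.mulVecLin.prodMap D.mulVecLin ∘ₗ
        (LinearEquiv.sumArrowLequivProdArrow m o R R : _ →ₗ[R] _) := by
    ext v i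
    rcases i with i | i <;>
      simp [LinearEquiv.sumArrowLequivProdArrow, Equiv.sumArrowEquivProdArrow, fromBlocks_mulVec]
  rw [rank, hlin, LinearMap.range_comp, LinearMap.range_comp_of_range_eq_top _
    (LinearEquiv.range _), LinearEquiv.finrank_map_eq, LinearMap.range_prodMap,
    Submodule.finrank_prod, rank, rank]

theorem rank_fromCols_zero [CommRing R] [StrongRankCondition R] [Fintype n] [Fintype o]
    [DecidableEq n] (A : Matrix m n R) :
    (fromCols A (0 : Matrix m o R)).rank = A.rank := by
  apply le_antisymm
  · calc (fromCols A (0 : Matrix m o R)).rank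
        = (A * fromCols (1 : Matrix n n R) (0 : Matrix n o R)).rank := by
          rw [mul_fromCols, Matrix.mul_one, Matrix.mul_zero]
      _ ≤ A.rank := rank_mul_le_left _ _
  · calc A.rank
        = (fromCols A (0 : Matrix m o R) *
            fromRows (1 : Matrix n n R) (0 : Matrix o n R)).rank := by
          rw [fromCols_mul_fromRows, Matrix.mul_one, Matrix.zero_mul, add_zero]
      _ ≤ _ := rank_mul_le_left _ _

theorem rank_fromBlocks_zero₂₁_of_eq_mul_add_mul [Field R] [Fintype l] [Fintype m] [Fintype n]
    [Fintype o] [DecidableEq l] [DecidableEq m] [DecidableEq n] [DecidableEq o]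
    {P : Matrix l m R} {Q : Matrix n o R} {E : Matrix l o R}
    {Y : Matrix m o R} {Z : Matrix l n R} (hE : E = P * Y + Z * Q) :
    (fromBlocks P E 0 Q).rank = P.rank + Q.rank := by
  have hfactor : fromBlocks P E 0 Q =
      (fromBlocks 1 Z 0 1 : Matrix (l ⊕ n) (l ⊕ n) R) * fromBlocks P 0 0 Q *
        (fromBlocks 1 Y 0 1 : Matrix (m ⊕ o) (m ⊕ o) R) := by
    simp [fromBlocks_multiply, hE]
  rw [hfactor, rank_mul_eq_left_of_isUnit_det _ _ (by simp),
    rank_mul_eq_right_of_isUnit_det _ _ (by simp),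
    rank_fromBlocks_zero_zero]

end Matrix

theorem two_step_chain_rank_eq_36
    {m₁ p₁ q₁ n₁ m₂ p₂ q₂ n₂ p₃ q₃ : ℕ}
    (A₁ : Matrix (Fin m₁) (Fin p₁) ℂ) (B₁ : Matrix (Fin q₁) (Fin n₁) ℂ)
    (C₁ : Matrix (Fin m₁) (Fin p₂) ℂ) (D₁ : Matrix (Fin q₂) (Fin n₁) ℂ)
    (E₁ : Matrix (Fin m₁) (Fin n₁) ℂ)
    (A₂ : Matrix (Fin m₂) (Fin p₂) ℂ) (B₂ : Matrix (Fin q₂) (Fin n₂) ℂ)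
    (C₂ : Matrix (Fin m₂) (Fin p₃) ℂ) (D₂ : Matrix (Fin q₃) (Fin n₂) ℂ)
    (E₂ : Matrix (Fin m₂) (Fin n₂) ℂ)
    (X₁ : Matrix (Fin p₁) (Fin q₁) ℂ) (X₂ : Matrix (Fin p₂) (Fin q₂) ℂ)
    (X₃ : Matrix (Fin p₃) (Fin q₃) ℂ)
    (h₁ : A₁ * X₁ * B₁ + C₁ * X₂ * D₁ = E₁)
    (h₂ : A₂ * X₂ * B₂ + C₂ * X₃ * D₂ = E₂) :
    (Matrix.fromRows
      (Matrix.fromCols A₁ (Matrix.fromCols E₁ (Matrix.fromCols C₁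
        (0 : Matrix (Fin m₁) (Fin n₂) ℂ))))
      (Matrix.fromRows
        (Matrix.fromCols (0 : Matrix (Fin q₂) (Fin p₁) ℂ)
          (Matrix.fromCols D₁ (Matrix.fromCols (0 : Matrix (Fin q₂) (Fin p₂) ℂ) B₂)))
        (Matrix.fromRows
          (Matrix.fromCols (0 : Matrix (Fin m₂) (Fin p₁) ℂ)
            (Matrix.fromCols (0 : Matrix (Fin m₂) (Fin n₁) ℂ)
              (Matrix.fromCols A₂ (-E₂))))
          (Matrix.fromCols (0 : Matrix (Fin q₃) (Fin p₁) ℂ)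
            (Matrix.fromCols (0 : Matrix (Fin q₃) (Fin n₁) ℂ)
              (Matrix.fromCols (0 : Matrix (Fin q₃) (Fin p₂) ℂ) D₂)))))).rank =
    (Matrix.fromRows
      (Matrix.fromCols A₁ (Matrix.fromCols C₁ (0 : Matrix (Fin m₁) (Fin p₃) ℂ)))
      (Matrix.fromCols (0 : Matrix (Fin m₂) (Fin p₁) ℂ)
        (Matrix.fromCols A₂ (0 : Matrix (Fin m₂) (Fin p₃) ℂ)))).rank +
    (Matrix.fromBlocks D₁ B₂ 0 D₂).rank := by
  set P : Matrix (Fin m₁ ⊕ Fin m₂) (Fin p₁ ⊕ Fin p₂) ℂ := fromBlocks A₁ C₁ 0 A₂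
  set Q : Matrix (Fin q₂ ⊕ Fin q₃) (Fin n₁ ⊕ Fin n₂) ℂ := fromBlocks D₁ B₂ 0 D₂
  have hE : fromBlocks E₁ 0 0 (-E₂) =
      P * fromBlocks (X₁ * B₁) 0 0 (-(X₂ * B₂)) +
        fromBlocks (C₁ * X₂) 0 0 (-(C₂ * X₃)) * Q := by
    simp only [P, Q, fromBlocks_multiply, fromBlocks_add, ← h₁, ← h₂]
    congr 1 <;> simp [Matrix.mul_assoc, add_comm]
  calc _ = ((fromBlocks P (fromBlocks E₁ 0 0 (-E₂)) 0 Q).submatrix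
          ((Equiv.sumAssoc _ _ _).symm.trans (Equiv.sumSumSumComm _ _ _ _))
          ((Equiv.sumAssoc _ _ _).symm.trans (Equiv.sumSumSumComm _ _ _ _))).rank := by
        congr 1
        ext (i | i | i | i) (j | j | j | j) <;> simp [P, Q]
    _ = P.rank + Q.rank := by rw [rank_submatrix, rank_fromBlocks_zero₂₁_of_eq_mul_add_mul hE]
    _ = _ := by
        rw [← rank_fromCols_zero P (o := Fin p₃), ← rank_submatrix _ (Equiv.refl _)
          (Equiv.sumAssoc _ _ _).symm]
        congr 2
        ext (i | i) (j | j | j) <;> simp [P]
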